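/- For every integer n ≥ 1, the set {P ∈ ℚ̄³ : f^n(P) = P} of n-periodic points of f is finite. -/

import Mathlib

/-- A fixed algebraic closure of `ℚ`. -/
noncomputable def Qbar : Type := AlgebraicClosure ℚ

noncomputable instance : Field Qbar := inferInstanceAs (Field (AlgebraicClosure ℚ))
noncomputable instance : Algebra ℚ Qbar := inferInstanceAs (Algebra ℚ (AlgebraicClosure ℚ))

/-- The automorphism `f(x,y,z) = (y, x + y - y³, 2z - y)` on `ℚ̄³`. -/
noncomputable def fA (P : Qbar × Qbar × Qbar) : Qbar × Qbar × Qbar :=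
  (P.2.1, P.1 + P.2.1 - P.2.1 ^ 3, 2 * P.2.2 - P.2.1)

/-!
The map `f` is a skew product over the Hénon map `h(x, y) = (y, x + y - y³)`, and on the fibres
it acts by `z ↦ 2z - y`, which expands differences by `2`; so a periodic point of `f` is
determined by its projection, a periodic point of `h`.

The `n`-periodic points of `h` are the common zeros of `g = Pₙ(x, y) - x` and
`k = Pₙ₊₁(x, y) - y`, where `h^[m](x, y) = (Pₘ, Pₘ₊₁)`. As polynomials in `y` both have leading
coefficient `±1`, so their resultant `r(x)` specialises well: `r(a)` is the resultant of
`g(a, ·)` and `k(a, ·)`. Over `ℂ`, if `|a| > 2` these have no common root, because the maximum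
`M` of `|x|` along a periodic orbit satisfies `M³ ≤ 3M`; hence `r ≠ 0`. Both coordinates of every
periodic point are roots of `r` (the `y`-coordinate is the `x`-coordinate of the next point), and
`ℚ̄` embeds into `ℂ`.
-/

open Polynomial Function

section HenonMap

variable {R S : Type*} [CommRing R] [CommRing S]

def henonMap (p : R × R) : R × R := (p.2, p.1 + p.2 - p.2 ^ 3)

lemma semiconj_prodMap_henonMap (φ : R →+* S) : Semiconj (Prod.map φ φ) henonMap henonMap :=
  fun p => by simp [henonMap]

lemma henonMap_iterate_fst_add_two (q : R × R) (k : ℕ) :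
    (henonMap^[k + 2] q).1 = (henonMap^[k] q).1 + (henonMap^[k + 1] q).1
      - (henonMap^[k + 1] q).1 ^ 3 := by
  rw [iterate_succ_apply', iterate_succ_apply']
  rfl

end HenonMap

section Escape

variable {𝕜 : Type*} [NormedField 𝕜]

lemma norm_le_two_of_periodic {u : ℕ → 𝕜} {n : ℕ} (hn : 0 < n) (hu : Periodic u n)
    (hrec : ∀ k, u (k + 2) = u k + u (k + 1) - u (k + 1) ^ 3) (k : ℕ) : ‖u k‖ ≤ 2 := by
  obtain ⟨j, -, hj⟩ := (Finset.range n).exists_max_image (‖u ·‖) ⟨0, Finset.mem_range.2 hn⟩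
  have hmax : ∀ k, ‖u k‖ ≤ ‖u j‖ := fun k => by
    rw [← hu.map_mod_nat]; exact hj _ (Finset.mem_range.2 (Nat.mod_lt k hn))
  obtain ⟨i, hi⟩ : ∃ i, i + 1 = j + n := ⟨j + n - 1, by omega⟩
  have hui : u (i + 1) = u j := by rw [hi, hu]
  have hcube : ‖u j‖ ^ 3 ≤ 3 * ‖u j‖ := calc
    ‖u j‖ ^ 3 = ‖u i + u (i + 1) - u (i + 2)‖ := by rw [hrec, ← hui, ← norm_pow]; ring_nf
    _ ≤ ‖u i‖ + ‖u (i + 1)‖ + ‖u (i + 2)‖ := norm_sub_le_of_le (norm_add_le _ _) le_rfl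
    _ ≤ 3 * ‖u j‖ := by linarith [hmax i, hmax (i + 1), hmax (i + 2)]
  have hM : ‖u j‖ ≤ 2 := by
    by_contra! h
    nlinarith [mul_pos (by linarith : (0 : ℝ) < ‖u j‖) (by nlinarith : (0 : ℝ) < ‖u j‖ ^ 2 - 3)]
  exact (hmax k).trans hM

lemma norm_fst_le_two_of_isPeriodicPt {q : 𝕜 × 𝕜} {n : ℕ} (hn : 0 < n)
    (hq : IsPeriodicPt henonMap n q) : ‖q.1‖ ≤ 2 :=
  norm_le_two_of_periodic (u := fun k => (henonMap^[k] q).1) hn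
    (fun k => by simp only [iterate_add_apply, hq.eq]) (henonMap_iterate_fst_add_two q) 0

end Escape

section HenonPoly

variable {R : Type*} [CommRing R]

/-- `henonMap^[k] (x, y) = (henonPoly k, henonPoly (k + 1))`, with `x` the inner variable `C X`
and `y` the outer variable `X`. -/
noncomputable def henonPoly : ℕ → R[X][X]
  | 0 => C X
  | 1 => X
  | k + 2 => henonPoly k + henonPoly (k + 1) - henonPoly (k + 1) ^ 3

lemma henonMap_iterate_eq_evalEval (a b : R) (k : ℕ) :
    henonMap^[k] (a, b) = ((henonPoly k).evalEval a b, (henonPoly (k + 1)).evalEval a b) := by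
  induction k with
  | zero => simp [henonPoly, evalEval_C]
  | succ k ih => simp [iterate_succ_apply', ih, henonMap, henonPoly]

lemma isPeriodicPt_henonMap_iff (a b : R) (n : ℕ) :
    IsPeriodicPt henonMap n (a, b) ↔
      (henonPoly n - C X).evalEval a b = 0 ∧ (henonPoly (n + 1) - X).evalEval a b = 0 := by
  simp [IsPeriodicPt, IsFixedPt, henonMap_iterate_eq_evalEval, sub_eq_zero, evalEval_C]

lemma natDegree_leadingCoeff_henonPoly_succ [Nontrivial R] (k : ℕ) :
    (henonPoly (k + 1) : R[X][X]).natDegree = 3 ^ k ∧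
      (henonPoly (k + 1) : R[X][X]).leadingCoeff = (-1) ^ k ∧
      (henonPoly k : R[X][X]).natDegree < 3 ^ k := by
  induction k with
  | zero => simp [henonPoly]
  | succ k ih =>
    obtain ⟨hdeg, hlc, hlt⟩ := ih
    have hunit : IsUnit ((henonPoly (k + 1) : R[X][X]).leadingCoeff ^ 3) := by
      rw [hlc]; exact (isUnit_neg_one.pow k).pow 3
    have hcube : (henonPoly (k + 1) ^ 3 : R[X][X]).natDegree = 3 ^ (k + 1) := by
      rw [natDegree_pow' hunit.ne_zero, hdeg, pow_succ, mul_comm]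
    have hlow : (henonPoly k + henonPoly (k + 1) : R[X][X]).natDegree
        < (henonPoly (k + 1) ^ 3 : R[X][X]).natDegree := by
      rw [hcube, pow_succ]
      exact (natDegree_add_le _ _).trans_lt (max_lt (by omega) (by omega))
    refine ⟨?_, ?_, by rw [hdeg]; exact Nat.pow_lt_pow_right (by norm_num) k.lt_succ_self⟩
    · show (henonPoly k + henonPoly (k + 1) - henonPoly (k + 1) ^ 3 : R[X][X]).natDegree = _
      rw [natDegree_sub_eq_right_of_natDegree_lt hlow, hcube]
    · show (henonPoly k + henonPoly (k + 1) - henonPoly (k + 1) ^ 3 : R[X][X]).leadingCoeff = _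
      rw [leadingCoeff_sub_of_degree_lt' (degree_lt_degree hlow), leadingCoeff_pow' hunit.ne_zero,
        hlc, ← pow_mul, mul_comm, pow_mul]
      norm_num [pow_succ]

lemma henonPoly_succ_sub_natDegree_isUnit [Nontrivial R] {q : R[X][X]} {k : ℕ}
    (hq : q.natDegree < 3 ^ k) :
    (henonPoly (k + 1) - q).natDegree = 3 ^ k ∧ IsUnit (henonPoly (k + 1) - q).leadingCoeff := by
  obtain ⟨hdeg, hlc, -⟩ := natDegree_leadingCoeff_henonPoly_succ (R := R) k
  rw [← hdeg] at hq
  rw [natDegree_sub_eq_left_of_natDegree_lt hq,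
    leadingCoeff_sub_of_degree_lt (degree_lt_degree hq), hdeg, hlc]
  exact ⟨rfl, isUnit_neg_one.pow k⟩

noncomputable def henonResultant (n : ℕ) : R[X] :=
  resultant (henonPoly n - C X) (henonPoly (n + 1) - X)

lemma eval_henonResultant_eq_zero [Nontrivial R] {n : ℕ} (hn : 0 < n) {q : R × R}
    (hq : IsPeriodicPt henonMap n q) : (henonResultant n).eval q.1 = 0 := by
  have hdeg : (henonPoly (n + 1) - X : R[X][X]).natDegree ≠ 0 := by
    rw [(henonPoly_succ_sub_natDegree_isUnit (by simp [Nat.one_lt_pow hn.ne'])).1]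
    positivity
  obtain ⟨p, p', -, -, h⟩ := exists_mul_add_mul_eq_C_resultant (henonPoly n - C X)
    (henonPoly (n + 1) - X) le_rfl le_rfl (Or.inr hdeg)
  obtain ⟨h₁, h₂⟩ := (isPeriodicPt_henonMap_iff q.1 q.2 n).1 hq
  have := congrArg (evalEval q.1 q.2) h
  rw [evalEval_C, evalEval_add, evalEval_mul, evalEval_mul, h₁, h₂, zero_mul, zero_mul,
    add_zero] at this
  exact this.symm

end HenonPoly

lemma eval_henonResultant_ne_zero {𝕜 : Type*} [NormedField 𝕜] [IsAlgClosed 𝕜] {n : ℕ}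
    (hn : 0 < n) {a : 𝕜} (ha : 2 < ‖a‖) : (henonResultant n).eval a ≠ 0 := by
  intro h
  obtain ⟨k, rfl⟩ : ∃ k, n = k + 1 := ⟨n - 1, by omega⟩
  have hg := (henonPoly_succ_sub_natDegree_isUnit (R := 𝕜) (q := C X) (k := k) (by simp)).2
  have hk := (henonPoly_succ_sub_natDegree_isUnit (R := 𝕜) (q := X) (k := k + 1) (by simp)).2
  have hres : resultant ((henonPoly (k + 1) - C X).map (evalRingHom a))
      ((henonPoly (k + 1 + 1) - X).map (evalRingHom a)) = 0 := by
    rw [natDegree_map_eq_of_isUnit_leadingCoeff _ hg,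
      natDegree_map_eq_of_isUnit_leadingCoeff _ hk, resultant_map_map]
    exact h
  have hcop := (resultant_eq_zero_iff.1 hres).2
  rw [isCoprime_iff_aeval_ne_zero_of_isAlgClosed 𝕜 𝕜] at hcop
  push Not at hcop
  obtain ⟨b, hb₁, hb₂⟩ := hcop
  have hper : IsPeriodicPt henonMap (k + 1) (a, b) := by
    rw [isPeriodicPt_henonMap_iff, ← map_evalRingHom_eval, ← map_evalRingHom_eval]
    simpa [aeval_def] using And.intro hb₁ hb₂
  exact ha.not_ge (norm_fst_le_two_of_isPeriodicPt hn hper)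

theorem setOf_isPeriodicPt_henonMap_finite {𝕜 : Type*} [NontriviallyNormedField 𝕜]
    [IsAlgClosed 𝕜] {n : ℕ} (hn : 0 < n) : {q : 𝕜 × 𝕜 | IsPeriodicPt henonMap n q}.Finite := by
  obtain ⟨a, ha⟩ := NormedField.exists_lt_norm 𝕜 2
  have hr : henonResultant n ≠ 0 := fun h =>
    eval_henonResultant_ne_zero hn ha (by rw [h, eval_zero])
  refine ((finite_setOfPred_isRoot hr).prod (finite_setOfPred_isRoot hr)).subset fun q hq => ?_
  exact ⟨eval_henonResultant_eq_zero hn hq, eval_henonResultant_eq_zero hn hq.apply⟩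

theorem setOf_isPeriodicPt_henonMap_finite_of_ringHom {K 𝕜 : Type*} [Field K]
    [NontriviallyNormedField 𝕜] [IsAlgClosed 𝕜] (φ : K →+* 𝕜) {n : ℕ} (hn : 0 < n) :
    {q : K × K | IsPeriodicPt henonMap n q}.Finite :=
  ((setOf_isPeriodicPt_henonMap_finite hn).preimage
    (Prod.map_injective.2 ⟨φ.injective, φ.injective⟩).injOn).subset
    fun _ hq => hq.map (semiconj_prodMap_henonMap φ)

noncomputable instance : CharZero Qbar := inferInstanceAs (CharZero (AlgebraicClosure ℚ))

noncomputable instance : Algebra.IsAlgebraic ℚ Qbar := AlgebraicClosure.isAlgebraic ℚ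

lemma semiconj_fA_henonMap :
    Semiconj (fun P : Qbar × Qbar × Qbar => (P.1, P.2.1)) fA henonMap :=
  fun _ => rfl

lemma fA_iterate_snd_snd_sub {P Q : Qbar × Qbar × Qbar} (hPQ : (P.1, P.2.1) = (Q.1, Q.2.1))
    (k : ℕ) : (fA^[k] P).2.2 - (fA^[k] Q).2.2 = 2 ^ k * (P.2.2 - Q.2.2) := by
  induction k with
  | zero => simp
  | succ k ih =>
    have h := (semiconj_fA_henonMap.iterate_right k).eq
    have hy : (fA^[k] P).2.1 = (fA^[k] Q).2.1 :=
      congrArg Prod.snd ((h P).trans ((congrArg _ hPQ).trans (h Q).symm))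
    simp only [iterate_succ_apply', fA]
    linear_combination 2 * ih - hy

lemma injOn_setOf_isPeriodicPt_fA {n : ℕ} (hn : 0 < n) :
    Set.InjOn (fun P : Qbar × Qbar × Qbar => (P.1, P.2.1)) {P | IsPeriodicPt fA n P} := by
  intro P hP Q hQ hPQ
  have hz := fA_iterate_snd_snd_sub hPQ n
  rw [hP.eq, hQ.eq] at hz
  have h2 : (2 : Qbar) ^ n - 1 ≠ 0 :=
    sub_ne_zero.2 (by exact_mod_cast (Nat.one_lt_two_pow hn.ne').ne')
  have hz' : P.2.2 = Q.2.2 := by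
    have : ((2 : Qbar) ^ n - 1) * (P.2.2 - Q.2.2) = 0 := by linear_combination -hz
    exact sub_eq_zero.1 ((mul_eq_zero.1 this).resolve_left h2)
  simp only [Prod.mk.injEq] at hPQ
  exact Prod.ext hPQ.1 (Prod.ext hPQ.2 hz')

/-- For every `n ≥ 1`, the set of `n`-periodic points of `f` in `ℚ̄³` is finite. -/
theorem stmt1 (n : ℕ) (hn : 1 ≤ n) :
    {P : Qbar × Qbar × Qbar | fA^[n] P = P}.Finite := by
  refine Set.Finite.of_finite_image ?_ (injOn_setOf_isPeriodicPt_fA hn)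
  refine (setOf_isPeriodicPt_henonMap_finite_of_ringHom
    (IsAlgClosed.lift : Qbar →ₐ[ℚ] ℂ).toRingHom hn).subset ?_
  rintro _ ⟨P, hP, rfl⟩
  exact IsPeriodicPt.map hP semiconj_fA_henonMap
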